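/- arXiv:2104.11621 — 5 statements merged into one kernel-verified Lean document; each statement's English description precedes it below -/
import Mathlib

section
/- A subset S of PG(2,q) is a ghost (i.e., its power sum polynomial is identically zero as a function) if and only if there exists a constant r in F_p such that every line of PG(2,q) meets S in a number of points congruent to r modulo p, and |S| ≡ r (mod p). -/
open MvPolynomial
open scoped LinearAlgebra.Projectivization

/-- The Rédei factor of a point of `PG(n,q)`. -/
noncomputable def redeiFactor {F : Type*} [Field F] {n : ℕ}
    (P : ℙ F (Fin n → F)) : MvPolynomial (Fin n) F :=
  ∑ i, C (P.rep i) * X i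

/-- The power sum polynomial of a finite set of points of `PG(n,q)`. -/
noncomputable def powerSum {F : Type*} [Field F] [Fintype F] {n : ℕ}
    (S : Finset (ℙ F (Fin n → F))) : MvPolynomial (Fin n) F :=
  ∑ P ∈ S, redeiFactor P ^ (Fintype.card F - 1)

lemma eval_powerSum_eq {F : Type*} [Field F] [Fintype F] [DecidableEq F] {n : ℕ}
    (S : Finset (ℙ F (Fin n → F))) (x : Fin n → F) :
    MvPolynomial.eval x (powerSum S) =
      ((S.card - (S.filter fun P => ∑ i, x i * P.rep i = 0).card : ℕ) : F) := by
  have hq : Fintype.card F - 1 ≠ 0 := by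
    have := Fintype.one_lt_card (α := F)
    omega
  unfold powerSum redeiFactor
  rw [map_sum]
  have heval : ∀ P : ℙ F (Fin n → F),
      MvPolynomial.eval x ((∑ i, C (P.rep i) * X i) ^ (Fintype.card F - 1)) =
        if (∑ i, x i * P.rep i) = 0 then 0 else 1 := by
    intro P
    rw [map_pow, map_sum]
    have : (∑ i, MvPolynomial.eval x (C (P.rep i) * X i)) = ∑ i, x i * P.rep i := by
      simp [mul_comm]
    rw [this]
    split_ifs with h
    · simp [h, zero_pow hq]
    · exact FiniteField.pow_card_sub_one_eq_one _ h
  rw [Finset.sum_congr rfl fun P _ => heval P]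
  rw [Finset.sum_ite, Finset.sum_const_zero, Finset.sum_const, zero_add, nsmul_eq_mul, mul_one]
  congr 1
  have := Finset.card_filter_add_card_filter_not (s := S)
    (p := fun P => ∑ i, x i * P.rep i = 0)
  omega

/-- A subset S of PG(2,q), q = p^h, is a ghost (its power sum polynomial vanishes at every
point of F_q^3) iff there is a constant r mod p such that every line meets S in a number of
points congruent to r mod p, and |S| ≡ r (mod p). -/
theorem ghost_iff_const_line_intersection (p : ℕ) [Fact p.Prime]
    {F : Type*} [Field F] [Fintype F] [DecidableEq F] [CharP F p]
    (S : Finset (ℙ F (Fin 3 → F))) :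
    (∀ x : Fin 3 → F, MvPolynomial.eval x (powerSum S) = 0) ↔
      ∃ r : ℕ, r < p ∧
        (∀ ℓ : Fin 3 → F, ℓ ≠ 0 →
          (S.filter fun P => ∑ i, ℓ i * P.rep i = 0).card ≡ r [MOD p]) ∧
        S.card ≡ r [MOD p] := by
  have hp := (Fact.out : p.Prime).pos
  constructor
  · intro h
    refine ⟨S.card % p, Nat.mod_lt _ hp, ?_, (Nat.mod_modEq S.card p).symm⟩
    intro ℓ hℓ
    have h0 := h ℓ
    rw [eval_powerSum_eq] at h0
    set T := S.filter fun P => ∑ i, ℓ i * P.rep i = 0 with hT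
    have hle : T.card ≤ S.card := Finset.card_filter_le _ _
    have hdvd : p ∣ S.card - T.card := (CharP.cast_eq_zero_iff F p _).mp h0
    have : T.card ≡ S.card [MOD p] := (Nat.modEq_iff_dvd' hle).mpr hdvd
    exact this.trans (Nat.mod_modEq S.card p).symm
  · rintro ⟨r, _, hline, hcard⟩ x
    rw [eval_powerSum_eq]
    by_cases hx : x = 0
    · simp [hx]
    · set T := S.filter fun P => ∑ i, x i * P.rep i = 0 with hT
      have hle : T.card ≤ S.card := Finset.card_filter_le _ _
      have := (hline x hx).trans hcard.symm
      rw [CharP.cast_eq_zero_iff F p]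
      exact (Nat.modEq_iff_dvd' hle).mp this
end

section
/- Let q = p^h and let P be the union of λp+1 distinct lines through a common point of PG(2,q), for some 0 ≤ λ ≤ p^(h-1). Then P is a ghost, i.e., its power sum polynomial is identically zero. -/
open MvPolynomial
open scoped LinearAlgebra.Projectivization

/-- The line of PG(2,q) with Plücker coordinates ℓ, as a finite set of points. -/
noncomputable def lineFinset {F : Type*} [Field F] [DecidableEq F]
    [Fintype (ℙ F (Fin 3 → F))] (ℓ : Fin 3 → F) : Finset (ℙ F (Fin 3 → F)) :=
  Finset.univ.filter fun P => ∑ i, ℓ i * P.rep i = 0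

/-! Evaluated at `x`, the power sum of the points `⟨v⟩` with `v` in a subspace `W` of dimension at
least two is `-∑_{v ∈ W} (x ⬝ᵥ v) ^ (q - 1)`: each point has `q - 1 ≡ -1` representatives. That sum
counts the `v ∈ W` off the hyperplane `x ⬝ᵥ v = 0`, namely `|W| - |W ∩ x^⊥|`, a difference of two
positive powers of `q`, so it vanishes in `F`. A polynomial of degree at most `q - 1` vanishing on all
of `F³` is zero, so every line is a ghost. Distinct lines of the pencil meet only in `P₀`, so summing
the power sums of the `λp + 1` lines counts every point of their union once, except `P₀`, which is
counted `λp + 1 ≡ 1 (mod p)` times. -/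

open Module

namespace Module.Dual

variable {F V : Type*} [Field F] [AddCommGroup V] [Module F V] [FiniteDimensional F V]

theorem finrank_le_finrank_ker_add_one (f : Module.Dual F V) :
    finrank F V ≤ finrank F (LinearMap.ker f) + 1 := by
  rcases eq_or_ne f 0 with rfl | hf
  · rw [LinearMap.ker_zero, finrank_top]
    omega
  · exact (finrank_ker_add_one_of_ne_zero hf).ge

end Module.Dual

namespace FiniteField

variable {F V : Type*} [Field F] [Fintype F] [AddCommGroup V] [Module F V] [Fintype V]

theorem cast_card_eq_zero_of_finrank_pos (h : 0 < finrank F V) : (Fintype.card V : F) = 0 := by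
  rw [Module.card_eq_pow_finrank (K := F), Nat.cast_pow, cast_card_eq_zero, zero_pow h.ne']

theorem sum_pow_card_sub_one_eq_zero (f : V →ₗ[F] F) (hV : 2 ≤ finrank F V) :
    ∑ v, f v ^ (Fintype.card F - 1) = 0 := by
  classical
  have hker : 0 < finrank F (LinearMap.ker f) := by
    have := Module.Dual.finrank_le_finrank_ker_add_one f
    omega
  calc ∑ v, f v ^ (Fintype.card F - 1) = ∑ v, (1 - if f v = 0 then 1 else 0) := by
        refine Finset.sum_congr rfl fun v _ => ?_
        split_ifs with hv
        · rw [hv, zero_pow (by have := Fintype.one_lt_card (α := F); omega), sub_self]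
        · rw [pow_card_sub_one_eq_one _ hv, sub_zero]
    _ = (Fintype.card V : F) - Fintype.card (LinearMap.ker f) := by
        rw [Finset.sum_sub_distrib, Finset.sum_boole, Finset.sum_const, Finset.card_univ,
          nsmul_one, Fintype.card_subtype]
        simp only [LinearMap.mem_ker]
    _ = 0 := by
        rw [cast_card_eq_zero_of_finrank_pos (by omega), cast_card_eq_zero_of_finrank_pos hker,
          sub_zero]

end FiniteField

namespace Projectivization

variable {F V : Type*} [Field F] [AddCommGroup V] [Module F V]

theorem units_smul_rep_injective : Function.Injective fun x : Fˣ × ℙ F V => x.1 • x.2.rep := by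
  rintro ⟨c, P⟩ ⟨d, Q⟩ h
  have hPQ : P = Q := by
    rw [← mk_rep P, ← mk_rep Q, mk_eq_mk_iff]
    exact ⟨c⁻¹ * d, by simpa [mul_smul, inv_smul_eq_iff] using h.symm⟩
  subst hPQ
  have hcd : (c : F) = d := smul_left_injective F P.rep_nonzero h
  simp [Units.ext hcd]

/-- Every nonzero vector of `W` is `c • P.rep` for exactly one unit `c` and point `P` of `W`. -/
theorem sum_submodule_eq_nsmul_sum_rep [Fintype F] {M : Type*} [AddCommMonoid M]
    (W : Submodule F V) [Fintype W] (S : Finset (ℙ F V)) (hS : ∀ P, P ∈ S ↔ P.rep ∈ W)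
    (g : V → M) (hg : ∀ (c : Fˣ) v, g (c • v) = g v) (hg0 : g 0 = 0) :
    ∑ v : W, g v = (Fintype.card F - 1) • ∑ P ∈ S, g P.rep := by
  classical
  symm
  calc (Fintype.card F - 1) • ∑ P ∈ S, g P.rep = ∑ P ∈ S, ∑ c : Fˣ, g (c • P.rep) := by
        simp only [hg, Finset.sum_const, Finset.card_univ, Fintype.card_units, Finset.smul_sum]
    _ = ∑ x ∈ Finset.univ ×ˢ S, g (x.1 • x.2.rep) := by
        rw [Finset.sum_product_right]
    _ = ∑ v : W with v ≠ 0, g v := by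
        refine Finset.sum_bij (fun x hx => ⟨x.1 • x.2.rep, ?_⟩) (fun x _ => ?_)
          (fun x _ y _ h => units_smul_rep_injective (congrArg Subtype.val h)) ?_
          (fun _ _ => rfl)
        · exact W.smul_of_tower_mem x.1 ((hS _).mp (Finset.mem_product.mp hx).2)
        · simpa [Units.smul_def] using x.2.rep_nonzero
        · rintro ⟨v, hvW⟩ hv
          have hv0 : v ≠ 0 := by simpa using hv
          obtain ⟨a, ha⟩ := exists_smul_eq_mk_rep F v hv0
          refine ⟨(a⁻¹, mk F v hv0), ?_, ?_⟩
          · simpa [hS, ← ha] using W.smul_of_tower_mem a hvW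
          · simp [← ha]
    _ = ∑ v : W, g v :=
        Finset.sum_filter_of_ne fun v _ hv => by
          rintro rfl
          exact hv hg0

theorem span_rep_pair_eq {W : Submodule F V} (hW : finrank F W = 2) {P Q : ℙ F V} (hPQ : P ≠ Q)
    (hP : P.rep ∈ W) (hQ : Q.rep ∈ W) : Submodule.span F {P.rep, Q.rep} = W := by
  have : FiniteDimensional F W := .of_finrank_pos (by omega)
  have hind : LinearIndependent F ![P.rep, Q.rep] := by
    convert independent_iff.mp ((independent_pair_iff_ne P Q).mpr hPQ) using 1
    ext i
    fin_cases i <;> rfl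
  refine Submodule.eq_of_le_of_finrank_le ?_ ?_
  · rw [Submodule.span_le, Set.insert_subset_iff, Set.singleton_subset_iff]
    exact ⟨hP, hQ⟩
  · rw [hW, ← Matrix.range_cons_cons_empty, finrank_span_eq_card hind, Fintype.card_fin]

end Projectivization

universe u

theorem MvPolynomial.eq_zero_of_eval_eq_zero_of_totalDegree_le {F : Type u} {σ : Type*}
    [Field F] [Fintype F] [Finite σ] {f : MvPolynomial σ F} (h : ∀ x, eval x f = 0)
    (hf : f.totalDegree ≤ Fintype.card F - 1) : f = 0 := by
  obtain ⟨k, ⟨e⟩⟩ := Finite.exists_equiv_fin σ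
  let e' : σ ≃ ULift.{u} (Fin k) := e.trans Equiv.ulift.symm
  apply rename_injective _ e'.injective
  rw [map_zero]
  refine eq_zero_of_eval_eq_zero _ _ _ (fun x => by rw [eval_rename]; exact h _) ?_
  rw [mem_restrictDegree]
  intro s hs i
  exact degreeOf_le_iff.mp
    ((degreeOf_le_totalDegree _ i).trans ((totalDegree_rename_le _ _).trans hf)) s hs

section PowerSum

variable {F : Type*} [Field F] [Fintype F] {n : ℕ}

theorem eval_powerSum (S : Finset (ℙ F (Fin n → F))) (x : Fin n → F) :
    eval x (powerSum S) = ∑ P ∈ S, (x ⬝ᵥ P.rep) ^ (Fintype.card F - 1) := by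
  simp [powerSum, redeiFactor, dotProduct, mul_comm]

theorem totalDegree_powerSum_le (S : Finset (ℙ F (Fin n → F))) :
    (powerSum S).totalDegree ≤ Fintype.card F - 1 := by
  refine (totalDegree_finsetSum _ _).trans (Finset.sup_le fun P _ => ?_)
  refine (totalDegree_pow _ _).trans ?_
  have hlin : (redeiFactor P).totalDegree ≤ 1 := by
    refine (totalDegree_finsetSum _ _).trans (Finset.sup_le fun i _ => ?_)
    exact (totalDegree_mul _ _).trans (by simp [totalDegree_C, totalDegree_X])
  simpa using Nat.mul_le_mul_left (Fintype.card F - 1) hlin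

theorem powerSum_eq_zero_of_two_le_finrank (W : Submodule F (Fin n → F))
    (hW : 2 ≤ finrank F W) (S : Finset (ℙ F (Fin n → F))) (hS : ∀ P, P ∈ S ↔ P.rep ∈ W) :
    powerSum S = 0 := by
  classical
  refine MvPolynomial.eq_zero_of_eval_eq_zero_of_totalDegree_le (fun x => ?_)
    (totalDegree_powerSum_le S)
  have hq : Fintype.card F - 1 ≠ 0 := by have := Fintype.one_lt_card (α := F); omega
  have key := Projectivization.sum_submodule_eq_nsmul_sum_rep W S hS
    (fun v => (x ⬝ᵥ v) ^ (Fintype.card F - 1))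
    (fun c v => by
      rw [Units.smul_def, dotProduct_smul, smul_eq_mul, mul_pow,
        FiniteField.pow_card_sub_one_eq_one _ c.ne_zero, one_mul])
    (by rw [dotProduct_zero, zero_pow hq])
  have hzero : ∑ v : W, (x ⬝ᵥ v) ^ (Fintype.card F - 1) = 0 :=
    FiniteField.sum_pow_card_sub_one_eq_zero ((dotProductEquiv F (Fin n) x).domRestrict W) hW
  rw [hzero, nsmul_eq_mul, Nat.cast_pred Fintype.card_pos, FiniteField.cast_card_eq_zero, zero_sub,
    neg_one_mul, eq_comm, neg_eq_zero] at key
  rw [eval_powerSum, key]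

end PowerSum

section Line

variable {F : Type*} [Field F] [DecidableEq F] [Fintype (ℙ F (Fin 3 → F))]

theorem mem_lineFinset {ℓ : Fin 3 → F} {P : ℙ F (Fin 3 → F)} :
    P ∈ lineFinset ℓ ↔ P.rep ∈ LinearMap.ker (dotProductEquiv F (Fin 3) ℓ) := by
  simp [lineFinset, dotProduct]

theorem powerSum_lineFinset [Fintype F] (ℓ : Fin 3 → F) : powerSum (lineFinset ℓ) = 0 := by
  refine powerSum_eq_zero_of_two_le_finrank _ ?_ _ fun _ => mem_lineFinset
  have := (dotProductEquiv F (Fin 3) ℓ).finrank_le_finrank_ker_add_one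
  rw [Module.finrank_fin_fun] at this
  omega

theorem lineFinset_eq_of_mem {a b : Fin 3 → F} (ha : a ≠ 0) (hb : b ≠ 0)
    {P Q : ℙ F (Fin 3 → F)} (hPQ : P ≠ Q) (hPa : P ∈ lineFinset a) (hQa : Q ∈ lineFinset a)
    (hPb : P ∈ lineFinset b) (hQb : Q ∈ lineFinset b) : lineFinset a = lineFinset b := by
  have hker {c : Fin 3 → F} (hc : c ≠ 0) :
      finrank F (LinearMap.ker (dotProductEquiv F (Fin 3) c)) = 2 := by
    have := Module.Dual.finrank_ker_add_one_of_ne_zero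
      ((dotProductEquiv F (Fin 3)).map_ne_zero_iff.mpr hc)
    rw [Module.finrank_fin_fun] at this
    omega
  ext R
  rw [mem_lineFinset, mem_lineFinset,
    ← Projectivization.span_rep_pair_eq (hker ha) hPQ (mem_lineFinset.mp hPa)
      (mem_lineFinset.mp hQa),
    Projectivization.span_rep_pair_eq (hker hb) hPQ (mem_lineFinset.mp hPb)
      (mem_lineFinset.mp hQb)]

end Line

theorem Finset.sum_sum_eq_card_nsmul_add_sum_erase_biUnion {α M : Type*} [DecidableEq α]
    [AddCommMonoid M] {L : Finset (Finset α)} {a : α} (ha : ∀ l ∈ L, a ∈ l)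
    (hL : (L : Set (Finset α)).PairwiseDisjoint (·.erase a)) (f : α → M) :
    ∑ l ∈ L, ∑ x ∈ l, f x = L.card • f a + ∑ x ∈ (L.biUnion id).erase a, f x := by
  have herase : (L.biUnion id).erase a = L.biUnion (·.erase a) := by
    ext x
    simp only [mem_erase, mem_biUnion, id]
    tauto
  calc ∑ l ∈ L, ∑ x ∈ l, f x = ∑ l ∈ L, (f a + ∑ x ∈ l.erase a, f x) :=
        sum_congr rfl fun l hl => (add_sum_erase l f (ha l hl)).symm
    _ = L.card • f a + ∑ x ∈ (L.biUnion id).erase a, f x := by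
        rw [sum_add_distrib, sum_const, herase, sum_biUnion hL]

theorem partial_pencil_ghost_general (p : ℕ)
    {F : Type*} [Field F] [Fintype F] [DecidableEq F] [CharP F p]
    [Fintype (ℙ F (Fin 3 → F))] [DecidableEq (ℙ F (Fin 3 → F))]
    (lam : ℕ)
    (Pen : Finset (Finset (ℙ F (Fin 3 → F))))
    (hlines : ∀ l ∈ Pen, ∃ ℓ : Fin 3 → F, ℓ ≠ 0 ∧ l = lineFinset ℓ)
    (P₀ : ℙ F (Fin 3 → F)) (hP₀ : ∀ l ∈ Pen, P₀ ∈ l)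
    (hcard : Pen.card = lam * p + 1) :
    powerSum (Pen.biUnion id) = 0 := by
  have hdisj : (Pen : Set (Finset (ℙ F (Fin 3 → F)))).PairwiseDisjoint (·.erase P₀) := by
    intro l hl l' hl' hne
    obtain ⟨a, ha, rfl⟩ := hlines l hl
    obtain ⟨b, hb, rfl⟩ := hlines l' hl'
    refine Finset.disjoint_left.mpr fun P hP hP' => hne ?_
    exact lineFinset_eq_of_mem ha hb (Finset.ne_of_mem_erase hP) (Finset.mem_of_mem_erase hP)
      (hP₀ _ hl) (Finset.mem_of_mem_erase hP') (hP₀ _ hl')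
  have hghost : ∑ l ∈ Pen, powerSum l = 0 := Finset.sum_eq_zero fun l hl => by
    obtain ⟨ℓ, -, rfl⟩ := hlines l hl
    exact powerSum_lineFinset ℓ
  have hP₀mem : P₀ ∈ Pen.biUnion id := by
    obtain ⟨l, hl⟩ := Finset.card_pos.mp (by omega : 0 < Pen.card)
    exact Finset.mem_biUnion.mpr ⟨l, hl, hP₀ l hl⟩
  have hp : ((lam * p : ℕ) : MvPolynomial (Fin 3) F) = 0 := by
    rw [Nat.cast_mul, CharP.cast_eq_zero _ p, mul_zero]
  unfold powerSum at hghost ⊢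
  rwa [Finset.sum_sum_eq_card_nsmul_add_sum_erase_biUnion hP₀ hdisj, hcard, succ_nsmul,
    nsmul_eq_mul, hp, zero_mul, zero_add,
    Finset.add_sum_erase _ (fun P => redeiFactor P ^ (Fintype.card F - 1)) hP₀mem] at hghost

/-- A partial pencil of λp+1 distinct lines through a common point of PG(2,q), q = p^h,
0 ≤ λ ≤ p^(h-1), is a ghost. -/
theorem partial_pencil_ghost (p h : ℕ) [Fact p.Prime]
    {F : Type*} [Field F] [Fintype F] [DecidableEq F] [CharP F p]
    [Fintype (ℙ F (Fin 3 → F))] [DecidableEq (ℙ F (Fin 3 → F))]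
    (hq : Fintype.card F = p ^ h) (hh : 1 ≤ h)
    (lam : ℕ) (hlam : lam ≤ p ^ (h - 1))
    (Pen : Finset (Finset (ℙ F (Fin 3 → F))))
    (hlines : ∀ l ∈ Pen, ∃ ℓ : Fin 3 → F, ℓ ≠ 0 ∧ l = lineFinset ℓ)
    (P₀ : ℙ F (Fin 3 → F)) (hP₀ : ∀ l ∈ Pen, P₀ ∈ l)
    (hcard : Pen.card = lam * p + 1) :
    powerSum (Pen.biUnion id) = 0 :=
  partial_pencil_ghost_general p lam Pen hlines P₀ hP₀ hcard
end

section
/- Any multiset sum (modulo p) of lines of PG(2,q) is a ghost, i.e., its power sum polynomial is identically zero. -/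
open MvPolynomial
open scoped LinearAlgebra.Projectivization

/-- The power sum polynomial of a multiset of points of PG(2,q) with multiplicities
in ℤ/pℤ (p the characteristic of F). -/
noncomputable def mpowerSum (p : ℕ) {F : Type*} [Field F] [Fintype F] [CharP F p]
    [Fintype (ℙ F (Fin 3 → F))]
    (m : ℙ F (Fin 3 → F) → ZMod p) : MvPolynomial (Fin 3) F :=
  ∑ P : ℙ F (Fin 3 → F),
    ZMod.castHom (dvd_refl p) F (m P) • (redeiFactor P ^ (Fintype.card F - 1))


set_option maxHeartbeats 1000000
set_option synthInstance.maxHeartbeats 400000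

noncomputable def Lpoly {F : Type*} [Field F] (v : Fin 3 → F) : MvPolynomial (Fin 3) F :=
  ∑ i, C (v i) * X i

lemma Lpoly_smul {F : Type*} [Field F] (c : F) (v : Fin 3 → F) :
    Lpoly (c • v) = C c * Lpoly v := by
  simp [Lpoly, Finset.mul_sum, mul_assoc]

lemma Lpoly_add {F : Type*} [Field F] (v w : Fin 3 → F) :
    Lpoly (v + w) = Lpoly v + Lpoly w := by
  simp [Lpoly, add_mul, Finset.sum_add_distrib]

lemma sum_plane_zero {F : Type*} [Field F] [Fintype F] (A B : MvPolynomial (Fin 3) F) :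
    ∑ st : F × F, (C st.1 * A + C st.2 * B) ^ (Fintype.card F - 1) = 0 := by
  set n := Fintype.card F - 1 with hn
  rw [Fintype.sum_prod_type]
  have key : ∀ s t : F, (C s * A + C t * B) ^ n =
      ∑ k ∈ Finset.range (n+1),
        C (s ^ k) * C (t ^ (n - k)) * (A ^ k * B ^ (n - k) * (n.choose k : MvPolynomial (Fin 3) F)) := by
    intro s t
    rw [add_pow]
    refine Finset.sum_congr rfl fun k hk => ?_
    rw [mul_pow, mul_pow, C_pow, C_pow]
    ring
  simp_rw [key]
  rw [Finset.sum_comm]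
  conv_lhs => enter [2, t]; rw [Finset.sum_comm]
  rw [Finset.sum_comm]
  apply Finset.sum_eq_zero
  intro k hk
  have swap2 : (∑ t : F, ∑ s : F,
      C (s ^ k) * C (t ^ (n - k)) * (A ^ k * B ^ (n - k) * (n.choose k : MvPolynomial (Fin 3) F)))
      = (C (∑ s : F, s ^ k) * C (∑ t : F, t ^ (n - k))) *
        (A ^ k * B ^ (n - k) * (n.choose k : MvPolynomial (Fin 3) F)) := by
    rw [map_sum, map_sum, Finset.sum_mul_sum, Finset.sum_mul, Finset.sum_comm]
    exact Finset.sum_congr rfl fun t _ => by rw [Finset.sum_mul]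
  rw [swap2]
  rw [Finset.mem_range] at hk
  rcases lt_or_eq_of_le (Nat.lt_succ_iff.mp hk) with h | h
  · have h0 : (∑ s : F, s ^ k) = 0 := FiniteField.sum_pow_lt_card_sub_one (K := F) k h
    rw [h0, map_zero, zero_mul, zero_mul]
  · have h0 : (∑ t : F, t ^ (n - k)) = 0 := by
      rw [h, Nat.sub_self]
      simp [Finset.card_univ, FiniteField.cast_card_eq_zero]
    rw [h0, map_zero, mul_zero, zero_mul]

lemma sum_ker_zero {F : Type*} [Field F] [Fintype F] [DecidableEq F]
    (ℓ : Fin 3 → F) (hℓ : ℓ ≠ 0) :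
    ∑ v ∈ Finset.univ.filter (fun v : Fin 3 → F => ∑ i, ℓ i * v i = 0),
      Lpoly v ^ (Fintype.card F - 1) = 0 := by
  set n := Fintype.card F - 1 with hn
  set φ : (Fin 3 → F) →ₗ[F] F := ∑ i, ℓ i • LinearMap.proj i with hφdef
  have hφ : ∀ v, φ v = ∑ i, ℓ i * v i := by
    intro v
    simp [hφdef, LinearMap.sum_apply, LinearMap.proj_apply, smul_eq_mul]
  have hφ0 : φ ≠ 0 := by
    intro h
    apply hℓ
    funext i
    have h2 := hφ (Pi.single i 1)
    rw [h] at h2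
    simp only [LinearMap.zero_apply, Pi.single_apply, mul_ite, mul_one, mul_zero,
      Finset.sum_ite_eq', Finset.mem_univ, if_true] at h2
    simp [← h2]
  have hker : Module.finrank F (LinearMap.ker φ) = 2 := by
    have h1 := LinearMap.finrank_range_add_finrank_ker φ
    have h2 : Module.finrank F (LinearMap.range φ) ≤ 1 := by
      have := Submodule.finrank_le (LinearMap.range φ)
      rwa [Module.finrank_self] at this
    have h3 : Module.finrank F (LinearMap.range φ) ≠ 0 := by
      rw [Ne, Submodule.finrank_eq_zero, LinearMap.range_eq_bot]
      exact hφ0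
    rw [Module.finrank_pi] at h1
    simp only [Fintype.card_fin] at h1
    omega
  let b := Module.finBasisOfFinrankEq F (LinearMap.ker φ) hker
  have hsum : ∑ v ∈ Finset.univ.filter (fun v : Fin 3 → F => ∑ i, ℓ i * v i = 0),
      Lpoly v ^ n = ∑ c : Fin 2 → F, Lpoly ((b.equivFun.symm c : LinearMap.ker φ) : Fin 3 → F) ^ n := by
    symm
    apply Finset.sum_bij (fun (c : Fin 2 → F) _ => ((b.equivFun.symm c : LinearMap.ker φ) : Fin 3 → F))
    · intro c _
      rw [Finset.mem_filter]
      refine ⟨Finset.mem_univ _, ?_⟩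
      rw [← hφ]
      have hm := (b.equivFun.symm c).2
      rwa [LinearMap.mem_ker] at hm
    · intro c1 _ c2 _ h
      exact b.equivFun.symm.injective (Subtype.coe_injective h)
    · intro v hv
      rw [Finset.mem_filter] at hv
      have hv' : v ∈ LinearMap.ker φ := by rw [LinearMap.mem_ker, hφ]; exact hv.2
      exact ⟨b.equivFun ⟨v, hv'⟩, Finset.mem_univ _, by rw [LinearEquiv.symm_apply_apply]⟩
    · intro c _
      rfl
  rw [hsum]
  have hrep : ∀ c : Fin 2 → F, ((b.equivFun.symm c : LinearMap.ker φ) : Fin 3 → F)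
      = c 0 • ((b 0 : LinearMap.ker φ) : Fin 3 → F) + c 1 • ((b 1 : LinearMap.ker φ) : Fin 3 → F) := by
    intro c
    rw [Module.Basis.equivFun_symm_apply]
    push_cast
    rw [Fin.sum_univ_two]
  simp_rw [hrep, Lpoly_add, Lpoly_smul]
  rw [← sum_plane_zero (Lpoly ((b 0 : LinearMap.ker φ) : Fin 3 → F)) (Lpoly ((b 1 : LinearMap.ker φ) : Fin 3 → F))]
  exact Fintype.sum_equiv (finTwoArrowEquiv F) _ _ (fun c => rfl)

lemma line_sum_zero {F : Type*} [Field F] [Fintype F] [DecidableEq F]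
    [Fintype (ℙ F (Fin 3 → F))] (ℓ : Fin 3 → F) (hℓ : ℓ ≠ 0) :
    ∑ P ∈ lineFinset ℓ, Lpoly (Projectivization.rep P) ^ (Fintype.card F - 1) = 0 := by
  classical
  set n := Fintype.card F - 1 with hn
  have hq : 1 < Fintype.card F := Fintype.one_lt_card
  have hsingle : (Pi.single (0 : Fin 3) (1 : F)) ≠ (0 : Fin 3 → F) := by
    intro h
    have := congrFun h 0
    simp at this
  set g : (Fin 3 → F) → ℙ F (Fin 3 → F) := fun v =>
    if h : v = 0 then Projectivization.mk F (Pi.single 0 1) hsingle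
    else Projectivization.mk F v h with hg
  set s : Finset (Fin 3 → F) :=
    Finset.univ.filter (fun v => (∑ i, ℓ i * v i = 0) ∧ v ≠ 0) with hs
  -- sum over s equals sum over the full kernel
  have h1 : ∑ v ∈ s, Lpoly v ^ n
      = ∑ v ∈ Finset.univ.filter (fun v : Fin 3 → F => ∑ i, ℓ i * v i = 0), Lpoly v ^ n := by
    apply Finset.sum_subset
    · intro v hv
      rw [Finset.mem_filter] at hv ⊢
      exact ⟨hv.1, hv.2.1⟩
    · intro v hv hv2
      rw [Finset.mem_filter] at hv hv2
      have hv0 : v = 0 := by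
        by_contra h
        exact hv2 ⟨hv.1, hv.2, h⟩
      subst hv0
      have : Lpoly (0 : Fin 3 → F) = 0 := by simp [Lpoly]
      rw [this, zero_pow]
      omega
  -- fiberwise grouping
  have hmaps : ∀ v ∈ s, g v ∈ lineFinset ℓ := by
    intro v hv
    rw [Finset.mem_filter] at hv
    obtain ⟨-, hv1, hv2⟩ := hv
    rw [hg]
    simp only [dif_neg hv2]
    rw [lineFinset, Finset.mem_filter]
    refine ⟨Finset.mem_univ _, ?_⟩
    obtain ⟨c, hc⟩ := Projectivization.exists_smul_eq_mk_rep F v hv2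
    rw [← hc]
    have : ∀ i, (c • v) i = (c : F) * v i := fun i => rfl
    simp_rw [this]
    calc ∑ i, ℓ i * ((c : F) * v i) = (c : F) * ∑ i, ℓ i * v i := by
          rw [Finset.mul_sum]; exact Finset.sum_congr rfl fun i _ => by ring
      _ = 0 := by rw [hv1, mul_zero]
  have h2 := Finset.sum_fiberwise_of_maps_to hmaps (fun v => Lpoly v ^ n)
  -- each fiber sums to (q-1) • Lpoly P.rep ^ n
  have h3 : ∀ P ∈ lineFinset ℓ, ∑ v ∈ s.filter (fun v => g v = P), Lpoly v ^ n
      = (Fintype.card F - 1) • (Lpoly (Projectivization.rep P) ^ n) := by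
    intro P hP
    rw [lineFinset, Finset.mem_filter] at hP
    have hP2 := hP.2
    have hfib : ∑ v ∈ s.filter (fun v => g v = P), Lpoly v ^ n
        = ∑ c : Fˣ, Lpoly ((c : F) • Projectivization.rep P) ^ n := by
      symm
      apply Finset.sum_bij (fun (c : Fˣ) _ => (c : F) • Projectivization.rep P)
      · intro c _
        rw [Finset.mem_filter, hs, Finset.mem_filter]
        have hne : (c : F) • Projectivization.rep P ≠ 0 :=
          smul_ne_zero (Units.ne_zero c) (Projectivization.rep_nonzero P)
        refine ⟨⟨Finset.mem_univ _, ?_, hne⟩, ?_⟩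
        · have : ∀ i, ((c : F) • Projectivization.rep P) i = (c : F) * Projectivization.rep P i :=
            fun i => rfl
          simp_rw [this]
          calc ∑ i, ℓ i * ((c : F) * Projectivization.rep P i)
              = (c : F) * ∑ i, ℓ i * Projectivization.rep P i := by
                rw [Finset.mul_sum]; exact Finset.sum_congr rfl fun i _ => by ring
            _ = 0 := by rw [hP2, mul_zero]
        · have hmk : Projectivization.mk F ((c : F) • Projectivization.rep P) hne = P := by
            conv_rhs => rw [← Projectivization.mk_rep P]
            rw [Projectivization.mk_eq_mk_iff]
            exact ⟨c, rfl⟩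
          rw [hg]
          simp only [dif_neg hne]
          exact hmk
      · intro c1 _ c2 _ h
        have := smul_left_injective F (Projectivization.rep_nonzero P) h
        exact Units.ext this
      · intro v hv
        rw [Finset.mem_filter, hs, Finset.mem_filter] at hv
        obtain ⟨⟨-, -, hv0⟩, hgv⟩ := hv
        rw [hg] at hgv
        simp only [dif_neg hv0] at hgv
        rw [← Projectivization.mk_rep P, Projectivization.mk_eq_mk_iff] at hgv
        obtain ⟨c, hc⟩ := hgv
        exact ⟨c, Finset.mem_univ _, hc⟩
      · intro c _
        rfl
    rw [hfib]
    have hconst : ∀ c : Fˣ, Lpoly ((c : F) • Projectivization.rep P) ^ n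
        = Lpoly (Projectivization.rep P) ^ n := by
      intro c
      rw [Lpoly_smul, mul_pow, ← C_pow, hn, FiniteField.pow_card_sub_one_eq_one (c : F) (Units.ne_zero c), C_1, one_mul]
    simp_rw [hconst]
    rw [Finset.sum_const, Finset.card_univ, Fintype.card_units]
  rw [Finset.sum_congr rfl h3] at h2
  rw [h1, sum_ker_zero ℓ hℓ] at h2
  -- h2 : ∑ P ∈ lineFinset ℓ, (q-1) • fP = 0
  rw [← Finset.smul_sum] at h2
  have hcast : ((Fintype.card F - 1 : ℕ) : F) = -1 := by
    rw [Nat.cast_sub hq.le, Nat.cast_one, FiniteField.cast_card_eq_zero, zero_sub]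
  have h4 : ((Fintype.card F - 1 : ℕ) : F) • ∑ P ∈ lineFinset ℓ, Lpoly (Projectivization.rep P) ^ n = 0 := by
    rw [Nat.cast_smul_eq_nsmul]
    exact h2
  rw [hcast, neg_smul, one_smul, neg_eq_zero] at h4
  exact h4


/-- Any multiset sum modulo p of lines of PG(2,q) is a ghost. -/
theorem multiset_sum_of_lines_ghost (p : ℕ) [Fact p.Prime]
    {F : Type*} [Field F] [Fintype F] [DecidableEq F] [CharP F p]
    [Fintype (ℙ F (Fin 3 → F))] [DecidableEq (ℙ F (Fin 3 → F))]
    (n : ℕ) (L : Fin n → (Fin 3 → F)) (hL : ∀ j, L j ≠ 0) :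
    mpowerSum p (∑ j, fun P => if P ∈ lineFinset (L j) then (1 : ZMod p) else 0) = 0 := by
  rw [mpowerSum]
  have hcast : ∀ P : ℙ F (Fin 3 → F),
      (ZMod.castHom (dvd_refl p) F)
        ((∑ j, fun P => if P ∈ lineFinset (L j) then (1 : ZMod p) else 0) P)
      = ∑ j, (if P ∈ lineFinset (L j) then (1 : F) else 0) := by
    intro P
    rw [Finset.sum_apply, map_sum]
    refine Finset.sum_congr rfl fun j _ => ?_
    split <;> simp
  simp_rw [hcast, Finset.sum_smul, ite_smul, one_smul, zero_smul]
  rw [Finset.sum_comm]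
  apply Finset.sum_eq_zero
  intro j _
  have hline := line_sum_zero (L j) (hL j)
  have hred : ∀ P : ℙ F (Fin 3 → F),
      redeiFactor P = Lpoly (Projectivization.rep P) := fun P => rfl
  calc ∑ P : ℙ F (Fin 3 → F),
        (if P ∈ lineFinset (L j) then redeiFactor P ^ (Fintype.card F - 1) else 0)
      = ∑ P ∈ lineFinset (L j), redeiFactor P ^ (Fintype.card F - 1) := by
        rw [← Finset.sum_filter, Finset.filter_mem_eq_inter, Finset.univ_inter]
    _ = ∑ P ∈ lineFinset (L j), Lpoly (Projectivization.rep P) ^ (Fintype.card F - 1) := by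
        simp_rw [hred]
    _ = 0 := hline
end

section
/- Let p be an odd prime. The power sum polynomials (aX+bY+cZ)^(p-1) of the binomial(p+1,2) points (1,b,c) of PG(2,p) with b,c ≥ 0 and b+c ≤ p-1 are linearly independent over F_p. -/
/-!
Comparing coefficients, a relation `∑ g t • (X + b_t Y + c_t Z) ^ n = 0` with `n = p - 1`
gives `∑ g t * b_t ^ i * c_t ^ j = 0` for all `i + j ≤ n`: the multinomial coefficients of degree
`n < p` are units mod `p`. Hence `∑ g t * F (1, b_t, c_t) = 0` for every form `F` of degree `n`.
The points `(b, c)` with `b + c ≤ n` are unisolvent: the product of the `n` linear forms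
`Y - u X` (`u < b₀`), `Z - v X` (`v < c₀`) and `Y + Z - w X` (`b₀ + c₀ < w ≤ n`) vanishes at every
such point except `(b₀, c₀)`, so each `g t₀` is zero.
-/

open MvPolynomial Finset

lemma natCast_ne_zero_of_pos_of_lt {K : Type*} [AddMonoidWithOne K] {p : ℕ} [CharP K p] {k : ℕ}
    (h₀ : 0 < k) (hk : k < p) : (k : K) ≠ 0 := by
  rw [Ne, CharP.cast_eq_zero_iff K p]
  exact fun hdvd => absurd (Nat.le_of_dvd h₀ hdvd) (by omega)

lemma Finsupp.cast_multinomial_ne_zero {K σ : Type*} [AddMonoidWithOne K] {p : ℕ} [Fact p.Prime]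
    [CharP K p] {d : σ →₀ ℕ} (hd : d.degree < p) : (d.multinomial : K) ≠ 0 := by
  rw [Ne, CharP.cast_eq_zero_iff K p]
  intro hdvd
  have hfact : p ∣ d.degree.factorial := by
    rw [Finsupp.degree_apply, ← Nat.multinomial_spec]
    exact Dvd.dvd.mul_left hdvd _
  exact absurd ((Fact.out : p.Prime).dvd_factorial.1 hfact) (by omega)

section PowerSums

variable {K σ ι : Type*} [CommRing K] [IsDomain K] {p : ℕ} [Fact p.Prime] [CharP K p] [Fintype σ]
  {s : Finset ι} {g : ι → K} {w : ι → σ → K} {n : ℕ}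

lemma sum_mul_prod_pow_eq_zero_of_sum_smul_pow_eq_zero
    (hsum : ∑ t ∈ s, g t • (∑ i, w t i • X i : MvPolynomial σ K) ^ n = 0) (hn : n < p)
    {d : σ →₀ ℕ} (hd : d.degree = n) :
    ∑ t ∈ s, g t * d.prod (fun i m => w t i ^ m) = 0 := by
  have hcoeff := congrArg (coeff d) hsum
  simp only [coeff_sum, coeff_smul, coeff_linearCombination_X_pow_of_fintype, smul_eq_mul,
    coeff_zero, if_pos (show d.sum (fun _ m => m) = n from hd),
    mul_left_comm _ (d.multinomial : K), ← mul_sum] at hcoeff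
  exact (mul_eq_zero.1 hcoeff).resolve_left (Finsupp.cast_multinomial_ne_zero (hd ▸ hn))

lemma sum_mul_eval_eq_zero_of_sum_smul_pow_eq_zero
    (hsum : ∑ t ∈ s, g t • (∑ i, w t i • X i : MvPolynomial σ K) ^ n = 0) (hn : n < p)
    {F : MvPolynomial σ K} (hF : F.IsHomogeneous n) :
    ∑ t ∈ s, g t * eval (w t) F = 0 := by
  simp only [eval_eq, mul_sum]
  rw [sum_comm]
  refine sum_eq_zero fun d hd => ?_
  have hmoment := sum_mul_prod_pow_eq_zero_of_sum_smul_pow_eq_zero hsum hn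
    (d := d) (by rw [Finsupp.degree_eq_weight_one]; exact hF (mem_support_iff.1 hd))
  simp only [mul_left_comm _ (coeff d F), ← mul_sum]
  exact mul_eq_zero_of_right _ hmoment

end PowerSums

section TriangleLagrange

variable (K : Type*) [CommRing K] (n b₀ c₀ : ℕ)

noncomputable def triangleLagrange : MvPolynomial (Fin 3) K :=
  (∏ u ∈ range b₀, (X 1 - C (u : K) * X 0)) * (∏ v ∈ range c₀, (X 2 - C (v : K) * X 0)) *
    ∏ w ∈ Ioc (b₀ + c₀) n, (X 1 + X 2 - C (w : K) * X 0)

variable {K n b₀ c₀}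

lemma isHomogeneous_triangleLagrange (h : b₀ + c₀ ≤ n) :
    (triangleLagrange K n b₀ c₀).IsHomogeneous n := by
  have hlin : ∀ (f : MvPolynomial (Fin 3) K) (a : K), f.IsHomogeneous 1 →
      (f - C a * X 0).IsHomogeneous 1 :=
    fun f a hf => hf.sub (isHomogeneous_C_mul_X a 0)
  have := ((IsHomogeneous.prod (range b₀) _ (fun _ => 1)
    fun u _ => hlin _ (u : K) (isHomogeneous_X K 1)).mul
    (IsHomogeneous.prod (range c₀) _ (fun _ => 1)
    fun v _ => hlin _ (v : K) (isHomogeneous_X K 2))).mul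
    (IsHomogeneous.prod (Ioc (b₀ + c₀) n) _ (fun _ => 1)
    fun w _ => hlin _ (w : K) ((isHomogeneous_X K 1).add (isHomogeneous_X K 2)))
  simp only [sum_const, card_range, Nat.card_Ioc, smul_eq_mul, mul_one,
    Nat.add_sub_cancel' h] at this
  exact this

lemma eval_triangleLagrange (b c : K) :
    eval ![1, b, c] (triangleLagrange K n b₀ c₀) =
      (∏ u ∈ range b₀, (b - u)) * (∏ v ∈ range c₀, (c - v)) *
        ∏ w ∈ Ioc (b₀ + c₀) n, (b + c - w) := by
  simp [triangleLagrange]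

lemma eval_triangleLagrange_eq_zero {b c : ℕ} (hbc : b + c ≤ n) (hne : (b, c) ≠ (b₀, c₀)) :
    eval ![1, (b : K), (c : K)] (triangleLagrange K n b₀ c₀) = 0 := by
  rw [eval_triangleLagrange]
  by_cases hb : b < b₀
  · rw [prod_eq_zero (mem_range.2 hb) (sub_self _), zero_mul, zero_mul]
  by_cases hc : c < c₀
  · rw [prod_eq_zero (mem_range.2 hc) (sub_self _), mul_zero, zero_mul]
  have hlt : b₀ + c₀ < b + c := by
    contrapose! hne
    rw [Prod.mk.injEq]
    omega
  rw [prod_eq_zero (mem_Ioc.2 ⟨hlt, hbc⟩) (by push_cast; ring), mul_zero]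

lemma eval_triangleLagrange_self_ne_zero [IsDomain K] {p : ℕ} [CharP K p] (h : b₀ + c₀ ≤ n)
    (hn : n < p) : eval ![1, (b₀ : K), (c₀ : K)] (triangleLagrange K n b₀ c₀) ≠ 0 := by
  rw [eval_triangleLagrange]
  refine mul_ne_zero (mul_ne_zero ?_ ?_) ?_ <;> rw [prod_ne_zero_iff]
  · intro u hu
    rw [mem_range] at hu
    rw [← Nat.cast_sub hu.le]
    exact natCast_ne_zero_of_pos_of_lt (by omega) (by omega)
  · intro v hv
    rw [mem_range] at hv
    rw [← Nat.cast_sub hv.le]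
    exact natCast_ne_zero_of_pos_of_lt (by omega) (by omega)
  · intro w hw
    rw [mem_Ioc] at hw
    rw [← neg_sub, ← Nat.cast_add, ← Nat.cast_sub hw.1.le, neg_ne_zero]
    exact natCast_ne_zero_of_pos_of_lt (by omega) (by omega)

end TriangleLagrange

theorem powerSums_linearIndependent_general (p : ℕ) [Fact p.Prime] :
    LinearIndependent (ZMod p)
      (fun bc : {x : ℕ × ℕ // x.1 + x.2 ≤ p - 1} =>
        (X 0 + C ((bc.1.1 : ZMod p)) * X 1 + C ((bc.1.2 : ZMod p)) * X 2) ^ (p - 1)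
          : {x : ℕ × ℕ // x.1 + x.2 ≤ p - 1} → MvPolynomial (Fin 3) (ZMod p)) := by
  have hn : p - 1 < p := Nat.sub_one_lt (Fact.out : p.Prime).ne_zero
  rw [linearIndependent_iff']
  intro s g hsum t₀ ht₀
  have hforms : ∑ t ∈ s, g t • (∑ i, (![1, (t.1.1 : ZMod p), (t.1.2 : ZMod p)] : Fin 3 → ZMod p) i
      • X i : MvPolynomial (Fin 3) (ZMod p)) ^ (p - 1) = 0 := by
    simpa [Fin.sum_univ_three, smul_eq_C_mul] using hsum
  have hval := sum_mul_eval_eq_zero_of_sum_smul_pow_eq_zero hforms hn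
    (isHomogeneous_triangleLagrange t₀.2)
  rw [sum_eq_single t₀ ?_ (absurd ht₀)] at hval
  · exact (mul_eq_zero.1 hval).resolve_right (eval_triangleLagrange_self_ne_zero t₀.2 hn)
  · rintro t - hne
    rw [eval_triangleLagrange_eq_zero t.2 fun h => hne (Subtype.ext h), mul_zero]

/-- For p an odd prime, the power sum polynomials (X + bY + cZ)^(p-1) of the
binomial(p+1,2) points (1,b,c) with b,c ≥ 0, b + c ≤ p-1, are linearly independent
over F_p. -/
theorem powerSums_linearIndependent (p : ℕ) [Fact p.Prime] (hp : Odd p) :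
    LinearIndependent (ZMod p)
      (fun bc : {x : ℕ × ℕ // x.1 + x.2 ≤ p - 1} =>
        (X 0 + C ((bc.1.1 : ZMod p)) * X 1 + C ((bc.1.2 : ZMod p)) * X 2) ^ (p - 1)
          : {x : ℕ × ℕ // x.1 + x.2 ≤ p - 1} → MvPolynomial (Fin 3) (ZMod p)) :=
  powerSums_linearIndependent_general p
end

section
/- Let p be prime. The map φ sending a multiset of points of PG(2,p) (with multiplicities in Z/pZ) to its power sum polynomial is surjective onto the space of homogeneous polynomials of degree p-1 in X,Y,Z over F_p; equivalently, the image of φ has F_p-dimension binomial(p+1,2). -/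
open MvPolynomial
open scoped LinearAlgebra.Projectivization

/-! Since `(c • v) · X = c (v · X)` and `c ^ (q - 1) = 1` for `c ≠ 0`, the span of the powers
`(P · X) ^ (q - 1)` over the points `P` contains `(a · X) ^ (q - 1)` for every vector `a`. As
`∑ x : F, x ^ e` is `0` for `e < q - 1` and `-1` for `e = q - 1`, weighting these by
`∏ i, a i ^ (q - 1 - δ i)` and summing over all `a` isolates one monomial:
`∑ a, (∏ i, a i ^ (q - 1 - δ i)) (a · X) ^ (q - 1) = (-1) ^ n * multinomial δ * X ^ δ`.
For `q = p` prime the multinomial coefficient divides `(p - 1)!`, hence is a unit mod `p`, so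
every monomial of degree `p - 1`, and thus every homogeneous form of that degree, is a power sum. -/

open Finset

theorem FiniteField.sum_pow_card_sub_one (F : Type*) [Field F] [Fintype F] :
    ∑ x : F, x ^ (Fintype.card F - 1) = -1 := by
  classical
  have hq : Fintype.card F - 1 ≠ 0 := by have := Fintype.one_lt_card (α := F); omega
  calc ∑ x : F, x ^ (Fintype.card F - 1) = ∑ x : F, (1 - if x = 0 then 1 else 0) := by
        refine Fintype.sum_congr _ _ fun x => ?_
        split_ifs with hx
        · simp [hx, zero_pow hq]
        · simp [FiniteField.pow_card_sub_one_eq_one x hx]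
    _ = -1 := by simp

theorem Finsupp.exists_lt_of_degree_eq_of_ne {σ : Type*} {s t : σ →₀ ℕ}
    (hdeg : s.degree = t.degree) (hne : s ≠ t) : ∃ i, s i < t i := by
  by_contra! hle
  have hts : t ≤ s := hle
  obtain ⟨u, rfl⟩ := exists_add_of_le hts
  rw [map_add, add_eq_left, Finsupp.degree_eq_zero_iff] at hdeg
  simp [hdeg] at hne

theorem Finsupp.multinomial_natCast_ne_zero {σ : Type*} {p : ℕ} [Fact p.Prime] (δ : σ →₀ ℕ)
    (hδ : δ.degree < p) : (δ.multinomial : ZMod p) ≠ 0 := by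
  rw [Ne, ZMod.natCast_eq_zero_iff]
  intro hdvd
  have hfac : δ.multinomial ∣ δ.degree.factorial :=
    Dvd.intro_left _ (Nat.multinomial_spec δ.support δ)
  exact absurd ((Nat.Prime.dvd_factorial Fact.out).1 (hdvd.trans hfac)) (not_le.2 hδ)

section WeightedSum

variable {F : Type*} [Field F] [Fintype F] {σ : Type*} [Fintype σ] [DecidableEq σ]

theorem prod_sum_pow_card_sub_one_sub_add {δ s : σ →₀ ℕ}
    (hdeg : δ.degree = s.degree) (hδ : δ.degree = Fintype.card F - 1) :
    ∏ i, ∑ x : F, x ^ (Fintype.card F - 1 - δ i + s i) =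
      if δ = s then (-1) ^ Fintype.card σ else 0 := by
  have hδle : ∀ i, δ i ≤ Fintype.card F - 1 := fun i => hδ ▸ Finsupp.le_degree i δ
  split_ifs with h
  · subst h
    have hexp : ∀ i, Fintype.card F - 1 - δ i + δ i = Fintype.card F - 1 := fun i =>
      Nat.sub_add_cancel (hδle i)
    simp [hexp, FiniteField.sum_pow_card_sub_one]
  · obtain ⟨i, hi⟩ := Finsupp.exists_lt_of_degree_eq_of_ne hdeg.symm (Ne.symm h)
    exact prod_eq_zero (mem_univ i)
      (FiniteField.sum_pow_lt_card_sub_one _ _ (by have := hδle i; omega))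

theorem sum_prod_pow_smul_linearForm_pow (δ : σ →₀ ℕ) (hδ : δ.degree = Fintype.card F - 1) :
    ∑ a : σ → F, (∏ i, a i ^ (Fintype.card F - 1 - δ i)) •
        (∑ i, a i • X i : MvPolynomial σ F) ^ (Fintype.card F - 1) =
      monomial δ ((-1) ^ Fintype.card σ * δ.multinomial : F) := by
  ext s
  have hsum : s.sum (fun _ m => m) = s.degree := rfl
  simp only [coeff_sum, coeff_smul, coeff_linearCombination_X_pow_of_fintype, hsum, coeff_monomial,
    smul_eq_mul]
  by_cases hs : s.degree = Fintype.card F - 1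
  · have hprod : ∀ a : σ → F, s.prod (fun r m => a r ^ m) = ∏ i, a i ^ s i := fun a =>
      Finsupp.prod_fintype _ _ fun _ => pow_zero _
    simp only [hs, if_true, hprod]
    calc ∑ a : σ → F, (∏ i, a i ^ (Fintype.card F - 1 - δ i)) * (s.multinomial * ∏ i, a i ^ s i)
        = s.multinomial * ∑ a : σ → F, ∏ i, a i ^ (Fintype.card F - 1 - δ i + s i) := by
          simp only [mul_sum, mul_left_comm _ (s.multinomial : F), ← prod_mul_distrib, pow_add]
      _ = s.multinomial * ∏ i, ∑ x : F, x ^ (Fintype.card F - 1 - δ i + s i) := by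
          rw [Fintype.prod_sum]
      _ = _ := by
          rw [prod_sum_pow_card_sub_one_sub_add (hδ.trans hs.symm) hδ]
          split_ifs with h
          · rw [h, mul_comm]
          · rw [mul_zero]
  · have hne : δ ≠ s := by rintro rfl; exact hs hδ
    simp [hs, hne]

end WeightedSum

noncomputable def redeiPowSpan (F : Type*) [Field F] [Fintype F] (n : ℕ) :
    Submodule F (MvPolynomial (Fin n) F) :=
  Submodule.span F (Set.range fun P : ℙ F (Fin n → F) => redeiFactor P ^ (Fintype.card F - 1))

theorem linearForm_pow_mem_redeiPowSpan {F : Type*} [Field F] [Fintype F] {n : ℕ}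
    (a : Fin n → F) :
    (∑ i, a i • X i : MvPolynomial (Fin n) F) ^ (Fintype.card F - 1) ∈ redeiPowSpan F n := by
  rcases eq_or_ne a 0 with rfl | ha
  · have hq : Fintype.card F - 1 ≠ 0 := by have := Fintype.one_lt_card (α := F); omega
    simp [zero_pow hq]
  obtain ⟨c, hc⟩ := Projectivization.exists_smul_eq_mk_rep F a ha
  have hredei : redeiFactor (Projectivization.mk F a ha) = (c : F) • ∑ i, a i • X i := by
    simp [redeiFactor, ← hc, smul_sum, smul_eq_C_mul, Units.smul_def, mul_assoc]
  have hpow : redeiFactor (Projectivization.mk F a ha) ^ (Fintype.card F - 1) =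
      (∑ i, a i • X i : MvPolynomial (Fin n) F) ^ (Fintype.card F - 1) := by
    rw [hredei, smul_pow, FiniteField.pow_card_sub_one_eq_one _ c.ne_zero, one_smul]
  exact hpow ▸ Submodule.subset_span ⟨_, rfl⟩

theorem monomial_mem_redeiPowSpan {p n : ℕ} [Fact p.Prime] (δ : Fin n →₀ ℕ)
    (hδ : δ.degree = p - 1) (c : ZMod p) : monomial δ c ∈ redeiPowSpan (ZMod p) n := by
  have hδ' : δ.degree = Fintype.card (ZMod p) - 1 := by rw [ZMod.card, hδ]
  set u : ZMod p := (-1) ^ n * δ.multinomial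
  have hu : u ≠ 0 := mul_ne_zero (by simp)
    (δ.multinomial_natCast_ne_zero (by have := (Fact.out : p.Prime).one_lt; omega))
  have hmem : monomial δ u ∈ redeiPowSpan (ZMod p) n := by
    have hsum := sum_prod_pow_smul_linearForm_pow δ hδ'
    rw [Fintype.card_fin] at hsum
    rw [← hsum]
    exact Submodule.sum_mem _ fun a _ => Submodule.smul_mem _ _ (linearForm_pow_mem_redeiPowSpan a)
  rw [← div_mul_cancel₀ c hu, ← smul_eq_mul, ← smul_monomial]
  exact Submodule.smul_mem _ _ hmem

theorem mem_redeiPowSpan_of_isHomogeneous {p n : ℕ} [Fact p.Prime]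
    {G : MvPolynomial (Fin n) (ZMod p)} (hG : G.IsHomogeneous (p - 1)) :
    G ∈ redeiPowSpan (ZMod p) n := by
  rw [← G.support_sum_monomial_coeff]
  exact Submodule.sum_mem _ fun d hd =>
    monomial_mem_redeiPowSpan d (hG.degree_eq_sum_deg_support hd).symm _

/-- For q = p prime, the map from multisets of points of PG(2,p) (multiplicities mod p)
to power sum polynomials is surjective onto the homogeneous polynomials of degree p-1. -/
theorem mpowerSum_surjective (p : ℕ) [Fact p.Prime]
    [Fintype (ℙ (ZMod p) (Fin 3 → ZMod p))]
    (G : MvPolynomial (Fin 3) (ZMod p)) (hG : G.IsHomogeneous (p - 1)) :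
    ∃ m : ℙ (ZMod p) (Fin 3 → ZMod p) → ZMod p, mpowerSum p m = G := by
  obtain ⟨m, hm⟩ :=
    (Submodule.mem_span_range_iff_exists_fun (ZMod p)).1 (mem_redeiPowSpan_of_isHomogeneous hG)
  exact ⟨m, by simpa [mpowerSum, ZMod.castHom_apply, ZMod.cast_id', ZMod.card] using hm⟩
end
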